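/- Any ordered rooted binary tree with n internal nodes can be transformed into the right caterpillar tree (the tree in which every left child of an internal node is a leaf) using at most n - 1 rotations. -/

import Mathlib

/-! Once the right subtree of `node l r` has been straightened into a caterpillar, repeated
rotations at the root turn `node l (rightCat m)` into a caterpillar, each one moving a single
internal node of `l` onto the right arm. So `node l r` needs at most `size l + size r = n - 1`
rotations. -/

inductive BT : Type
  | leaf : BT
  | node : BT → BT → BT
deriving DecidableEq

namespace BT

/-- number of internal nodes -/
def size : BT → ℕ
  | leaf => 0
  | node l r => size l + size r + 1

/-- number of leaves -/
def nl (t : BT) : ℕ := size t + 1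

/-- one (right) rotation somewhere in the tree -/
inductive Rot : BT → BT → Prop
  | root (a b c : BT) : Rot (node (node a b) c) (node a (node b c))
  | congrL {l l' : BT} (r : BT) : Rot l l' → Rot (node l r) (node l' r)
  | congrR (l : BT) {r r' : BT} : Rot r r' → Rot (node l r) (node l r')

/-- a rotation move: a right rotation or its inverse (a left rotation) -/
def Move (s t : BT) : Prop := Rot s t ∨ Rot t s

/-- `Chain n s t`: `s` is transformed into `t` by `n` rotation moves -/
inductive Chain : ℕ → BT → BT → Prop
  | refl (t : BT) : Chain 0 t t
  | step {n : ℕ} {s u t : BT} : Move s u → Chain n u t → Chain (n + 1) s t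

/-- rotation distance -/
noncomputable def dR (s t : BT) : ℕ := sInf {n | Chain n s t}

def isNode : BT → Bool
  | leaf => false
  | node _ _ => true

/-- the multiset of leaf partitions induced by internal edges, where the leaves of the
tree are numbered from `k` on, left to right; each internal edge is recorded by the
set of leaf numbers below it. -/
def iparts : BT → ℕ → Multiset (Finset ℕ)
  | leaf, _ => 0
  | node l r, k =>
      ((if isNode l then {Finset.Ico k (k + nl l)} else 0) + iparts l k)
        + ((if isNode r then {Finset.Ico (k + nl l) (k + nl l + nl r)} else 0)
            + iparts r (k + nl l))

/-- number of common edge pairs -/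
def commonEdges (s t : BT) : ℕ := ((iparts s 0) ∩ (iparts t 0)).card

/-- the right caterpillar: every internal node's left child is a leaf -/
def rightCat : ℕ → BT
  | 0 => leaf
  | n + 1 => node leaf (rightCat n)

theorem Chain.trans {m n : ℕ} {s u t : BT} (h₁ : Chain m s u) (h₂ : Chain n u t) :
    Chain (m + n) s t := by
  induction h₁ with
  | refl => simpa using h₂
  | step hsu _ ih => simpa [Nat.add_right_comm] using Chain.step hsu (ih h₂)

theorem Chain.congrR (l : BT) {k : ℕ} {r r' : BT} (h : Chain k r r') :
    Chain k (node l r) (node l r') := by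
  induction h with
  | refl t => exact Chain.refl _
  | step hmove _ ih => exact Chain.step (hmove.imp (Rot.congrR l) (Rot.congrR l)) ih

theorem chain_node_rightCat (l : BT) (m : ℕ) :
    Chain l.size (node l (rightCat m)) (rightCat (l.size + m + 1)) := by
  induction l generalizing m with
  | leaf => simpa [size, rightCat] using Chain.refl (rightCat (m + 1))
  | node a b iha ihb =>
    have h := Chain.step (Or.inl (Rot.root a b (rightCat m)))
      (((ihb m).congrR a).trans (iha (b.size + m + 1)))
    convert h using 2 <;> simp only [size] <;> omega

theorem Chain.node_rightCat (l : BT) {k m : ℕ} {r : BT} (h : Chain k r (rightCat m)) :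
    Chain (k + l.size) (node l r) (rightCat (l.size + m + 1)) :=
  (h.congrR l).trans (chain_node_rightCat l m)

theorem exists_chain_rightCat_le_size (T : BT) :
    ∃ k, Chain k T (rightCat T.size) ∧ k ≤ T.size := by
  induction T with
  | leaf => exact ⟨0, Chain.refl _, le_rfl⟩
  | node l r _ ihr =>
    obtain ⟨k, hk, hle⟩ := ihr
    exact ⟨k + l.size, hk.node_rightCat l, by simp only [size]; omega⟩

theorem to_right_caterpillar (n : ℕ) (T : BT) (hT : T.size = n) :
    ∃ k, Chain k T (rightCat n) ∧ k ≤ n - 1 := by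
  subst hT
  cases T with
  | leaf => exact ⟨0, Chain.refl _, le_rfl⟩
  | node l r =>
    obtain ⟨k, hk, hle⟩ := exists_chain_rightCat_le_size r
    exact ⟨k + l.size, hk.node_rightCat l, by simp only [size]; omega⟩

end BT
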